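/- Let S be a normal irreducible Noetherian simply connected scheme and f : S → S a surjective étale endomorphism. Suppose there exists an integral scheme T and a finite étale morphism h : T → S factoring as h = f ∘ g with g : T → S surjective. Then f is injective. -/

import Mathlib

open AlgebraicGeometry CategoryTheory

/-- A scheme is simply connected if every finite étale morphism from a connected
scheme to it is an isomorphism. -/
def AlgebraicGeometry.Scheme.SimplyConnected (S : Scheme) : Prop :=
  ∀ (T : Scheme) (h : T ⟶ S), IsFinite h → Etale h → ConnectedSpace T → IsIso h

/-- A scheme is normal if all its stalks are integrally closed domains. -/
def AlgebraicGeometry.Scheme.IsNormal (X : Scheme) : Prop :=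
  ∀ x : X, IsIntegrallyClosed (X.presheaf.stalk x) ∧ IsDomain (X.presheaf.stalk x)

theorem AlgebraicGeometry.Scheme.SimplyConnected.isIso {S T : Scheme} (hS : S.SimplyConnected)
    (h : T ⟶ S) [IsFinite h] [Etale h] [ConnectedSpace T] : IsIso h :=
  hS T h inferInstance inferInstance inferInstance

theorem surjective_etale_endo_injective_general
    (S : Scheme) (hsc : S.SimplyConnected)
    (f : S ⟶ S)
    (T : Scheme) [IsIntegral T] (h : T ⟶ S) [IsFinite h] [Etale h]
    (g : T ⟶ S) (hfac : h = g ≫ f) (hgsurj : Function.Surjective g.base) :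
    Function.Injective f.base := by
  subst hfac
  have : IsIso (g ≫ f) := hsc.isIso (g ≫ f)
  exact Function.Injective.of_comp_right (g ≫ f).isOpenEmbedding.injective hgsurj

/-- Let `S` be a normal irreducible Noetherian simply connected scheme and
`f : S ⟶ S` a surjective étale endomorphism. Suppose there is an integral scheme `T`
and a finite étale `h : T ⟶ S` with `h = f ∘ g` for a surjective `g : T ⟶ S`.
Then `f` is injective. -/
theorem surjective_etale_endo_injective
    (S : Scheme) [IrreducibleSpace S] (hnorm : S.IsNormal)
    [AlgebraicGeometry.IsNoetherian S] (hsc : S.SimplyConnected)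
    (f : S ⟶ S) [Etale f] (hfsurj : Function.Surjective f.base)
    (T : Scheme) [IsIntegral T] (h : T ⟶ S) [IsFinite h] [Etale h]
    (g : T ⟶ S) (hfac : h = g ≫ f) (hgsurj : Function.Surjective g.base) :
    Function.Injective f.base :=
  surjective_etale_endo_injective_general S hsc f T h g hfac hgsurj
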